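/- For a bounded distributive lattice D with prime filter space X, the map a ↦ U_a = { p ∈ X : a ∈ p } is a lattice isomorphism from D onto the lattice of compact open subsets of X. -/
import Mathlib


/-- A filter on a bounded (distributive) lattice: nonempty, proper,
upward closed, and closed under meets. -/
def IsLatticeFilter {D : Type*} [Lattice D] (F : Set D) : Prop :=
  F.Nonempty ∧ F ≠ Set.univ ∧ (∀ a ∈ F, ∀ b, a ≤ b → b ∈ F) ∧
    ∀ a ∈ F, ∀ b ∈ F, a ⊓ b ∈ F

/-- A prime filter. -/
def IsPrimeLatticeFilter {D : Type*} [Lattice D] (F : Set D) : Prop :=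
  IsLatticeFilter F ∧ ∀ a b : D, a ⊔ b ∈ F → a ∈ F ∨ b ∈ F

/-- The space of prime filters of a lattice. -/
def PrimeFilterSpace (D : Type*) [Lattice D] : Type _ :=
  {F : Set D // IsPrimeLatticeFilter F}

/-- The basic open set associated to a lattice element. -/
def basicOpen {D : Type*} [Lattice D] (a : D) : Set (PrimeFilterSpace D) :=
  {p | a ∈ p.1}

/-- The Stone topology on the space of prime filters. -/
instance {D : Type*} [Lattice D] : TopologicalSpace (PrimeFilterSpace D) :=
  TopologicalSpace.generateFrom (Set.range (basicOpen (D := D)))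

section Aux

variable {D : Type*} [DistribLattice D] [BoundedOrder D]

lemma top_mem_primeFilter (p : PrimeFilterSpace D) : (⊤ : D) ∈ p.1 := by
  obtain ⟨⟨⟨a, ha⟩, _, hup, _⟩, _⟩ := p.2
  exact hup a ha ⊤ le_top

lemma bot_notMem_primeFilter (p : PrimeFilterSpace D) : (⊥ : D) ∉ p.1 := by
  obtain ⟨⟨_, hne, hup, _⟩, _⟩ := p.2
  intro hbot
  exact hne (Set.eq_univ_of_forall fun b => hup ⊥ hbot b bot_le)

lemma basicOpen_top : basicOpen (⊤ : D) = Set.univ :=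
  Set.eq_univ_of_forall fun p => top_mem_primeFilter p

lemma basicOpen_bot : basicOpen (⊥ : D) = ∅ :=
  Set.eq_empty_of_forall_notMem fun p => bot_notMem_primeFilter p

lemma basicOpen_inf (a b : D) : basicOpen (a ⊓ b) = basicOpen a ∩ basicOpen b := by
  ext p
  obtain ⟨⟨_, _, hup, hinf⟩, _⟩ := p.2
  exact ⟨fun h => ⟨hup _ h a inf_le_left, hup _ h b inf_le_right⟩,
    fun ⟨ha, hb⟩ => hinf a ha b hb⟩

lemma basicOpen_sup (a b : D) : basicOpen (a ⊔ b) = basicOpen a ∪ basicOpen b := by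
  ext p
  obtain ⟨⟨_, _, hup, _⟩, hprime⟩ := p.2
  exact ⟨fun h => hprime a b h,
    fun h => h.elim (fun ha => hup a ha _ le_sup_left) (fun hb => hup b hb _ le_sup_right)⟩

lemma basicOpen_finset_sup {ι : Type*} (t : Finset ι) (f : ι → D) :
    basicOpen (t.sup f) = ⋃ i ∈ t, basicOpen (f i) := by
  induction t using Finset.cons_induction with
  | empty => simp [basicOpen_bot]
  | cons i t hi ih => simp [Finset.sup_cons, basicOpen_sup, ih]

lemma isBasis_basicOpen :
    TopologicalSpace.IsTopologicalBasis (Set.range (basicOpen (D := D))) := by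
  refine ⟨?_, ?_, rfl⟩
  · rintro _ ⟨a, rfl⟩ _ ⟨b, rfl⟩ x hx
    exact ⟨basicOpen (a ⊓ b), ⟨a ⊓ b, rfl⟩, by rwa [basicOpen_inf],
      by rw [basicOpen_inf]⟩
  · refine Set.eq_univ_of_forall fun p => ⟨basicOpen ⊤, ⟨⊤, rfl⟩, top_mem_primeFilter p⟩

lemma isOpen_basicOpen (a : D) : IsOpen (basicOpen a) :=
  isBasis_basicOpen.isOpen ⟨a, rfl⟩

/-- The complement of a prime ideal (in mathlib's sense) is a prime lattice filter. -/
lemma compl_isPrimeLatticeFilter (J : Order.Ideal D) (hJ : Order.Ideal.IsPrime J) :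
    IsPrimeLatticeFilter ((J : Set D)ᶜ) := by
  constructor
  · refine ⟨?_, ?_, ?_, ?_⟩
    · by_contra h
      rw [Set.not_nonempty_iff_eq_empty, Set.compl_empty_iff] at h
      exact hJ.toIsProper.ne_univ (by ext x; simp [← SetLike.mem_coe, h])
    · intro h
      obtain ⟨x, hx⟩ := J.nonempty
      have : x ∈ (J : Set D)ᶜ := h ▸ Set.mem_univ x
      exact this hx
    · intro a ha b hab hb
      exact ha (J.lower hab hb)
    · intro a ha b hb
      intro hmem
      rcases hJ.mem_or_mem hmem with h | h
      · exact ha h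
      · exact hb h
  · intro a b hab
    by_contra h
    push_neg at h
    obtain ⟨ha, hb⟩ := h
    simp only [Set.mem_compl_iff, not_not] at ha hb
    exact hab (Order.Ideal.sup_mem ha hb)

/-- Key separation: if `a` is not below the sup of any finite subset of `S`, there is a
prime filter containing `a` and avoiding `S`. -/
lemma exists_primeFilter_of_not_le_sup (a : D) (S : Set D)
    (h : ∀ t : Finset D, ↑t ⊆ S → ¬ a ≤ t.sup id) :
    ∃ p : PrimeFilterSpace D, a ∈ p.1 ∧ ∀ b ∈ S, b ∉ p.1 := by
  classical
  -- the ideal generated by S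
  let I : Order.Ideal D :=
    { carrier := {x | ∃ t : Finset D, ↑t ⊆ S ∧ x ≤ t.sup id}
      lower' := fun x y hxy ⟨t, ht, hx⟩ => ⟨t, ht, le_trans hxy hx⟩
      nonempty' := ⟨⊥, ∅, by simp⟩
      directed' := by
        rintro x ⟨t₁, ht₁, hx⟩ y ⟨t₂, ht₂, hy⟩
        refine ⟨x ⊔ y, ⟨t₁ ∪ t₂, ?_, ?_⟩, le_sup_left, le_sup_right⟩
        · intro z hz
          rcases Finset.mem_union.mp (by exact_mod_cast hz) with h' | h'
          · exact ht₁ h'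
          · exact ht₂ h'
        · exact sup_le (le_trans hx (Finset.sup_mono Finset.subset_union_left))
            (le_trans hy (Finset.sup_mono Finset.subset_union_right)) }
  have hdisj : Disjoint ((Order.PFilter.principal a : Order.PFilter D) : Set D) (I : Set D) := by
    rw [Set.disjoint_left]
    rintro x hx ⟨t, ht, hxt⟩
    exact h t ht (le_trans (Order.PFilter.mem_principal.mp hx) hxt)
  obtain ⟨J, hJprime, hIJ, hJdisj⟩ :=
    DistribLattice.prime_ideal_of_disjoint_filter_ideal hdisj
  refine ⟨⟨(J : Set D)ᶜ, compl_isPrimeLatticeFilter J hJprime⟩, ?_, ?_⟩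
  · exact Set.disjoint_left.mp hJdisj (Order.PFilter.mem_principal.mpr le_rfl)
  · intro b hb hbc
    exact hbc (hIJ ⟨{b}, by simpa using hb, by simp⟩)

lemma le_iff_basicOpen_subset (a b : D) : a ≤ b ↔ basicOpen a ⊆ basicOpen b := by
  constructor
  · intro hab p hp
    obtain ⟨⟨_, _, hup, _⟩, _⟩ := p.2
    exact hup a hp b hab
  · intro hsub
    by_contra hab
    have h : ∀ t : Finset D, ↑t ⊆ ({b} : Set D) → ¬ a ≤ t.sup id := by
      intro t ht hle
      apply hab
      refine le_trans hle (Finset.sup_le ?_)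
      intro c hc
      have : c = b := ht hc
      simp [this, id]
    obtain ⟨p, hap, hbp⟩ := exists_primeFilter_of_not_le_sup a {b} h
    exact hbp b rfl (hsub hap)

lemma isCompact_basicOpen (a : D) : IsCompact (basicOpen a) := by
  classical
  refine isCompact_of_finite_subcover fun {ι} U hU hcover => ?_
  set S : Set D := {b | ∃ i, basicOpen b ⊆ U i} with hS
  -- a is below the sup of a finite subset of S
  have hfin : ∃ t : Finset D, ↑t ⊆ S ∧ a ≤ t.sup id := by
    by_contra h
    push_neg at h
    obtain ⟨p, hap, hSp⟩ := exists_primeFilter_of_not_le_sup a S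
      (fun t ht => h t ht)
    obtain ⟨i, hpi⟩ := Set.mem_iUnion.mp (hcover hap)
    obtain ⟨t, ⟨b, rfl⟩, hpt, hti⟩ :=
      isBasis_basicOpen.exists_subset_of_mem_open hpi (hU i)
    exact hSp b ⟨i, hti⟩ hpt
  obtain ⟨t, htS, hat⟩ := hfin
  -- choose for each b ∈ t an index
  have hch : ∀ b ∈ t, ∃ i, basicOpen b ⊆ U i := fun b hb => htS hb
  choose f hf using hch
  refine ⟨t.attach.image fun b => f b.1 b.2, ?_⟩
  intro p hp
  have : p ∈ basicOpen (t.sup id) := (le_iff_basicOpen_subset a _).mp hat hp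
  rw [basicOpen_finset_sup] at this
  obtain ⟨b, hb⟩ := Set.mem_iUnion.mp this
  obtain ⟨hbt, hpb⟩ := Set.mem_iUnion.mp hb
  refine Set.mem_iUnion.mpr ⟨f b hbt, Set.mem_iUnion.mpr ⟨?_, hf b hbt hpb⟩⟩
  exact Finset.mem_image.mpr ⟨⟨b, hbt⟩, Finset.mem_attach _ _, rfl⟩

lemma surj_basicOpen (O : Set (PrimeFilterSpace D)) (hc : IsCompact O) (ho : IsOpen O) :
    ∃ a : D, basicOpen a = O := by
  classical
  have hcover : O ⊆ ⋃ b : {b : D // basicOpen b ⊆ O}, basicOpen b.1 := by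
    intro p hp
    obtain ⟨t, ⟨b, rfl⟩, hpt, htO⟩ := isBasis_basicOpen.exists_subset_of_mem_open hp ho
    exact Set.mem_iUnion.mpr ⟨⟨b, htO⟩, hpt⟩
  obtain ⟨t, ht⟩ := hc.elim_finite_subcover (fun b : {b : D // basicOpen b ⊆ O} => basicOpen b.1) (fun b => isOpen_basicOpen b.1) hcover
  refine ⟨t.sup fun b => b.1, ?_⟩
  apply le_antisymm
  · rw [basicOpen_finset_sup]
    exact Set.iUnion₂_subset fun b _ => b.2
  · rw [basicOpen_finset_sup]
    exact ht

end Aux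

theorem primeFilterSpace_representation (D : Type*) [DistribLattice D] [BoundedOrder D] :
    ∃ e : D ≃o {O : Set (PrimeFilterSpace D) // IsCompact O ∧ IsOpen O},
      ∀ a : D, (e a : Set (PrimeFilterSpace D)) = basicOpen a := by
  have hinj : Function.Injective
      (fun a : D => (⟨basicOpen a, isCompact_basicOpen a, isOpen_basicOpen a⟩ :
        {O : Set (PrimeFilterSpace D) // IsCompact O ∧ IsOpen O})) := by
    intro a b hab
    have h : basicOpen a = basicOpen b := congrArg Subtype.val hab
    exact le_antisymm ((le_iff_basicOpen_subset a b).mpr h.le)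
      ((le_iff_basicOpen_subset b a).mpr h.ge)
  have hsurj : Function.Surjective
      (fun a : D => (⟨basicOpen a, isCompact_basicOpen a, isOpen_basicOpen a⟩ :
        {O : Set (PrimeFilterSpace D) // IsCompact O ∧ IsOpen O})) := by
    rintro ⟨O, hc, ho⟩
    obtain ⟨a, ha⟩ := surj_basicOpen O hc ho
    exact ⟨a, Subtype.ext ha⟩
  refine ⟨{ toEquiv := Equiv.ofBijective _ ⟨hinj, hsurj⟩
            map_rel_iff' := ?_ }, fun a => rfl⟩
  intro a b
  constructor
  · intro h
    exact (le_iff_basicOpen_subset a b).mpr h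
  · intro h
    exact (le_iff_basicOpen_subset a b).mp h
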